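/- arXiv:2008.11679 — 3 statements merged into one kernel-verified Lean document; each statement's English description precedes it below -/
import Mathlib

section
/- Let R be a commutative ring with 3 = 0, let b be a unit of R, let c, d ∈ R with d³ = 0, and let a ∈ R with a³ = 1. Set h = b·X + c + d·X³, g = a·X + (1−a)·X³, and g′ = a·X + (1−a)·b⁻¹·(c³ − c) + (1−a)·(b² − b⁻¹d)·X³ in R[X]. Then g.comp h = h.comp g′; that is, the conjugate of the μ₃-substitution g by h is g′. -/
open Polynomial

/-!
In characteristic 3 cubing is additive, so `h³ = b³X³ + c³` because `d³ = 0`, and `g′³ = X³`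
because `a³ = 1` and `(1 - a)³ = 1 - a³ = 0`. Hence `g ∘ h = a·h + (1 - a)·h³` and
`h ∘ g′ = b·g′ + c + d·X³` are both of the form `u·X + v + w·X³`, with the same coefficients
once `b·b⁻¹ = 1` is used.
-/

theorem add_pow_three_of_three_eq_zero {S : Type*} [CommRing S] (h3 : (3 : S) = 0) (x y : S) :
    (x + y) ^ 3 = x ^ 3 + y ^ 3 := by
  linear_combination (x ^ 2 * y + x * y ^ 2) * h3

theorem one_sub_pow_three_of_three_eq_zero {S : Type*} [CommRing S] (h3 : (3 : S) = 0) (a : S) :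
    (1 - a) ^ 3 = 1 - a ^ 3 := by
  linear_combination (a ^ 2 - a) * h3

theorem Polynomial.cubic_subst_pow_three {R : Type*} [CommRing R] (h3 : (3 : R) = 0)
    (u v w : R) :
    (C u * X + C v + C w * X ^ 3) ^ 3 = C (u ^ 3) * X ^ 3 + C (v ^ 3) + C (w ^ 3) * X ^ 9 := by
  have h3X : (3 : R[X]) = 0 := by rw [← C_ofNat, h3, C_0]
  rw [add_pow_three_of_three_eq_zero h3X, add_pow_three_of_three_eq_zero h3X]
  simp only [mul_pow, C_pow, ← pow_mul]

/-- In characteristic 3, the conjugate of the μ₃-substitution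
`g = a·X + (1−a)·X³` (with `a³ = 1`) by `h = b·X + c + d·X³` is
`g′ = a·X + (1−a)b⁻¹(c³ − c) + (1−a)(b² − b⁻¹d)·X³`, i.e. `g ∘ h = h ∘ g′`. -/
theorem mu3_conj_char_three {R : Type*} [CommRing R] (h3 : (3 : R) = 0)
    (b : Rˣ) (c d : R) (hd : d ^ 3 = 0) (a : R) (ha : a ^ 3 = 1) :
    let bi : R := ((b⁻¹ : Rˣ) : R)
    let h : R[X] := C (b : R) * X + C c + C d * X ^ 3
    let g : R[X] := C a * X + C (1 - a) * X ^ 3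
    let g' : R[X] := C a * X + C ((1 - a) * bi * (c ^ 3 - c))
      + C ((1 - a) * ((b : R) ^ 2 - bi * d)) * X ^ 3
    g.comp h = h.comp g' := by
  intro bi h g g'
  have hb : C (b : R) * C bi = 1 := by rw [← C_mul, b.mul_inv, C_1]
  have ha' : (1 - a) ^ 3 = 0 := by
    rw [one_sub_pow_three_of_three_eq_zero h3, ha, sub_self]
  have hh : h ^ 3 = C ((b : R) ^ 3) * X ^ 3 + C (c ^ 3) := by
    simp only [h, cubic_subst_pow_three h3, hd, C_0, zero_mul, add_zero]
  have hg' : g' ^ 3 = X ^ 3 := by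
    have hv : ((1 - a) * bi * (c ^ 3 - c)) ^ 3 = 0 := by
      rw [mul_pow, mul_pow, ha', zero_mul, zero_mul]
    have hw : ((1 - a) * ((b : R) ^ 2 - bi * d)) ^ 3 = 0 := by rw [mul_pow, ha', zero_mul]
    simp only [g', cubic_subst_pow_three h3, ha, hv, hw, C_1, C_0, one_mul, zero_mul, add_zero]
  calc g.comp h = C a * h + C (1 - a) * h ^ 3 := by simp [g]
    _ = C (b : R) * g' + C c + C d * g' ^ 3 := by
      rw [hh, hg']
      simp only [h, g', C_mul, C_sub, C_pow, C_1]
      linear_combination (1 - C a) * (C d * X ^ 3 - (C c ^ 3 - C c)) * hb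
    _ = h.comp g' := by simp [h]
end

section
/- Let R be a commutative ring with 3 = 0, let b be a unit of R, and let c, d ∈ R with d³ = 0. Set h = b·X + c + d·X³, g = −X, and g′ = −X + b⁻¹c − b⁻⁴c³d in R[X]. Then g.comp h = h.comp g′; that is, conjugating the involution t ↦ −t by h yields the substitution t ↦ −t + b⁻¹c − b⁻⁴c³d. -/
/-!
In characteristic 3 the cube map is additive, so `L = b·X + d·X³` satisfies
`L(−t + e) = −L(t) + L(e)`, and with `h = L + c` the identity `g ∘ h = h ∘ g′` for
`g′ = −X + e` reduces to the constant equation `L(e) = −2c = c`. Since `d³ = 0`, this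
equation is solved by one Newton step from `e₀ = b⁻¹c`: `e = b⁻¹c − b⁻⁴c³d`.
-/

open Polynomial

section CharThree

variable {R : Type*} [CommRing R]

theorem sub_pow_three_of_three_eq_zero (h3 : (3 : R) = 0) (x y : R) :
    (x - y) ^ 3 = x ^ 3 - y ^ 3 := by
  linear_combination (x * y ^ 2 - x ^ 2 * y) * h3

theorem Polynomial.three_eq_zero_of_three_eq_zero (h3 : (3 : R) = 0) : (3 : R[X]) = 0 := by
  rw [← map_ofNat C 3, h3, map_zero]

theorem additive_cubic_comp_neg_X_add_C (h3 : (3 : R) = 0) (b d e : R) :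
    (C b * X + C d * X ^ 3).comp (-X + C e) =
      -(C b * X + C d * X ^ 3) + C (b * e + d * e ^ 3) := by
  have frobenius := sub_pow_three_of_three_eq_zero (three_eq_zero_of_three_eq_zero h3) (C e) X
  simp only [add_comp, mul_comp, C_comp, X_comp, pow_comp, map_add, map_mul, map_pow]
  rw [neg_add_eq_sub, frobenius]
  ring

theorem additive_cubic_eval_newton_step (h3 : (3 : R) = 0) {b bi : R} (hb : b * bi = 1)
    (c : R) {d : R} (hd : d ^ 3 = 0) :
    b * (bi * c - bi ^ 4 * c ^ 3 * d) + d * (bi * c - bi ^ 4 * c ^ 3 * d) ^ 3 = c := by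
  rw [sub_pow_three_of_three_eq_zero h3]
  linear_combination (c - bi ^ 3 * c ^ 3 * d) * hb - bi ^ 12 * c ^ 9 * d * hd

end CharThree

/-- In characteristic 3, conjugating the involution `g : t ↦ −t` by
`h = b·X + c + d·X³` yields `g′ : t ↦ −t + b⁻¹c − b⁻⁴c³d`,
i.e. `g ∘ h = h ∘ g′`. -/
theorem involution_conj_char_three {R : Type*} [CommRing R] (h3 : (3 : R) = 0)
    (b : Rˣ) (c d : R) (hd : d ^ 3 = 0) :
    let bi : R := ((b⁻¹ : Rˣ) : R)
    let h : R[X] := C (b : R) * X + C c + C d * X ^ 3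
    let g : R[X] := -X
    let g' : R[X] := -X + C (bi * c - bi ^ 4 * c ^ 3 * d)
    g.comp h = h.comp g' := by
  intro bi h g g'
  have split : h = (C (b : R) * X + C d * X ^ 3) + C c := by ring
  rw [split, add_comp, C_comp, additive_cubic_comp_neg_X_add_C h3,
    additive_cubic_eval_newton_step h3 b.mul_inv c hd]
  simp only [g, neg_comp, X_comp]
  linear_combination (-C c) * three_eq_zero_of_three_eq_zero h3
end

section
/- Let R be a commutative ring with 2 = 0, let b be a unit of R, let c, d, e ∈ R with d⁴ = 0 and e² = 0, and let a ∈ R with a⁴ = 1. Set h = b·X + c + d·X² + e·X⁴, g = a·X + (a+a²)·X² + (1+a²)·X⁴, and g′ = a·X + (a+1)·b⁻¹·(c + ac² + (a+1)·(b⁻²c²d + b⁻²c⁴d + c⁴)) + (a+a²)·(b⁻¹d + b)·X² + (a+1)·(b⁻¹e + ab⁻¹d² + (a+1)·(b⁻³d³ + bd + b³))·X⁴ in R[X]. Then g.comp h = h.comp g′; that is, the conjugate of the μ₄-substitution g by h is g′. -/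
/-!
Since `2 = 0`, squaring is additive, so the squares and fourth powers of `h` and of `g′` are again
sparse. With `e² = 0`, `d⁴ = 0` and `(a + 1)⁴ = a⁴ + 1 = 0` most of their terms vanish; in
particular `g′⁴ = X⁴`. Both sides of `g ∘ h = h ∘ g′` then only have terms in `1, X, X², X⁴`,
whose coefficients agree after cancelling `b·b⁻¹` and discarding multiples of `2`.
-/

section CharTwo

theorem add_sq_of_two_eq_zero {S : Type*} [CommSemiring S] (h2 : (2 : S) = 0) (x y : S) :
    (x + y) ^ 2 = x ^ 2 + y ^ 2 := by
  rw [add_sq, h2, zero_mul, zero_mul, add_zero]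

theorem add_pow_four_of_two_eq_zero {S : Type*} [CommSemiring S] (h2 : (2 : S) = 0) (x y : S) :
    (x + y) ^ 4 = x ^ 4 + y ^ 4 := by
  rw [show 4 = 2 * 2 from rfl, pow_mul, pow_mul, pow_mul, add_sq_of_two_eq_zero h2,
    add_sq_of_two_eq_zero h2]

variable {S : Type*} [CommRing S]

theorem sq_quartic_of_two_eq_zero (h2 : (2 : S) = 0) {δ : S} (hδ : δ ^ 2 = 0) (α β γ x : S) :
    (α * x + β + γ * x ^ 2 + δ * x ^ 4) ^ 2 = α ^ 2 * x ^ 2 + β ^ 2 + γ ^ 2 * x ^ 4 := by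
  linear_combination x ^ 8 * hδ +
    (α * β * x + α * γ * x ^ 3 + α * δ * x ^ 5 + β * γ * x ^ 2 + β * δ * x ^ 4 + γ * δ * x ^ 6) * h2

theorem pow_four_quartic_of_two_eq_zero (h2 : (2 : S) = 0) {γ δ : S} (hγ : γ ^ 4 = 0)
    (hδ : δ ^ 2 = 0) (α β x : S) :
    (α * x + β + γ * x ^ 2 + δ * x ^ 4) ^ 4 = α ^ 4 * x ^ 4 + β ^ 4 := by
  rw [show 4 = 2 * 2 from rfl, pow_mul, sq_quartic_of_two_eq_zero h2 hδ]
  linear_combination x ^ 8 * hγ +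
    (α ^ 2 * β ^ 2 * x ^ 2 + α ^ 2 * γ ^ 2 * x ^ 6 + β ^ 2 * γ ^ 2 * x ^ 4) * h2

theorem add_one_pow_four_of_two_eq_zero (h2 : (2 : S) = 0) {a : S} (ha : a ^ 4 = 1) :
    (a + 1) ^ 4 = 0 := by
  rw [add_pow_four_of_two_eq_zero h2, ha, one_pow, one_add_one_eq_two, h2]

theorem sq_mul_add_one_sq_of_two_eq_zero (h2 : (2 : S) = 0) {a : S} (ha : a ^ 4 = 1) :
    a ^ 2 * (a + 1) ^ 2 = (a + 1) ^ 2 := by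
  linear_combination add_one_pow_four_of_two_eq_zero h2 ha - (a + 1) ^ 3 * h2

end CharTwo

section Conjugate

variable {S : Type*} [CommRing S] (a b bi c d e : S)

def mu4ConjConst : S :=
  (a + 1) * bi * (c + a * c ^ 2 + (a + 1) * (bi ^ 2 * c ^ 2 * d + bi ^ 2 * c ^ 4 * d + c ^ 4))

def mu4ConjQuad : S := (a + a ^ 2) * (bi * d + b)

def mu4ConjQuartic : S :=
  (a + 1) * (bi * e + a * bi * d ^ 2 + (a + 1) * (bi ^ 3 * d ^ 3 + b * d + b ^ 3))

variable {a b bi c d e}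

theorem mu4ConjConst_sq (h2 : (2 : S) = 0) (ha : a ^ 4 = 1) :
    mu4ConjConst a bi c d ^ 2 = (a + 1) ^ 2 * bi ^ 2 * (c ^ 2 + c ^ 4) := by
  have hu := add_one_pow_four_of_two_eq_zero h2 ha
  have hau := sq_mul_add_one_sq_of_two_eq_zero h2 ha
  rw [mu4ConjConst]
  generalize a + 1 = u at hu hau ⊢
  rw [mul_pow, mul_pow, add_sq_of_two_eq_zero h2, add_sq_of_two_eq_zero h2]
  linear_combination
    bi ^ 2 * c ^ 4 * hau + bi ^ 2 * (bi ^ 2 * c ^ 2 * d + bi ^ 2 * c ^ 4 * d + c ^ 4) ^ 2 * hu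

theorem mu4ConjConst_pow_four (h2 : (2 : S) = 0) (ha : a ^ 4 = 1) :
    mu4ConjConst a bi c d ^ 4 = 0 := by
  rw [mu4ConjConst, mul_pow, mul_pow, add_one_pow_four_of_two_eq_zero h2 ha, zero_mul, zero_mul]

theorem mu4ConjQuad_sq (h2 : (2 : S) = 0) (ha : a ^ 4 = 1) :
    mu4ConjQuad a b bi d ^ 2 = (a + 1) ^ 2 * (bi ^ 2 * d ^ 2 + b ^ 2) := by
  rw [mu4ConjQuad, mul_pow, show a + a ^ 2 = a * (a + 1) by ring, add_sq_of_two_eq_zero h2]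
  linear_combination (bi ^ 2 * d ^ 2 + b ^ 2) * sq_mul_add_one_sq_of_two_eq_zero h2 ha

theorem mu4ConjQuad_pow_four (h2 : (2 : S) = 0) (ha : a ^ 4 = 1) :
    mu4ConjQuad a b bi d ^ 4 = 0 := by
  rw [mu4ConjQuad, mul_pow, show a + a ^ 2 = a * (a + 1) by ring, mul_pow,
    add_one_pow_four_of_two_eq_zero h2 ha, mul_zero, zero_mul]

theorem mu4ConjQuartic_sq (h2 : (2 : S) = 0) (hd : d ^ 4 = 0) (he : e ^ 2 = 0) (ha : a ^ 4 = 1) :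
    mu4ConjQuartic a b bi d e ^ 2 = 0 := by
  have hu := add_one_pow_four_of_two_eq_zero h2 ha
  rw [mu4ConjQuartic]
  generalize a + 1 = u at hu ⊢
  rw [mul_pow, add_sq_of_two_eq_zero h2, add_sq_of_two_eq_zero h2]
  linear_combination u ^ 2 * bi ^ 2 * he + u ^ 2 * a ^ 2 * bi ^ 2 * hd +
    (bi ^ 3 * d ^ 3 + b * d + b ^ 3) ^ 2 * hu

theorem mu4_conj_identity (h2 : (2 : S) = 0) (hb : b * bi = 1) (hd : d ^ 4 = 0) (he : e ^ 2 = 0)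
    (ha : a ^ 4 = 1) (x : S) :
    let y := b * x + c + d * x ^ 2 + e * x ^ 4
    let y' := a * x + mu4ConjConst a bi c d + mu4ConjQuad a b bi d * x ^ 2 +
      mu4ConjQuartic a b bi d e * x ^ 4
    a * y + (a + a ^ 2) * y ^ 2 + (1 + a ^ 2) * y ^ 4 = b * y' + c + d * y' ^ 2 + e * y' ^ 4 := by
  intro y y'
  have hy2 : y ^ 2 = b ^ 2 * x ^ 2 + c ^ 2 + d ^ 2 * x ^ 4 :=
    sq_quartic_of_two_eq_zero h2 he b c d x
  have hy4 : y ^ 4 = b ^ 4 * x ^ 4 + c ^ 4 := pow_four_quartic_of_two_eq_zero h2 hd he b c x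
  have hy'2 : y' ^ 2 =
      a ^ 2 * x ^ 2 + mu4ConjConst a bi c d ^ 2 + mu4ConjQuad a b bi d ^ 2 * x ^ 4 :=
    sq_quartic_of_two_eq_zero h2 (mu4ConjQuartic_sq h2 hd he ha) _ _ _ x
  have hy'4 : y' ^ 4 = x ^ 4 := by
    rw [pow_four_quartic_of_two_eq_zero h2 (mu4ConjQuad_pow_four h2 ha)
      (mu4ConjQuartic_sq h2 hd he ha), ha, mu4ConjConst_pow_four h2 ha, one_mul, add_zero]
  have hby' : b * y' = a * b * x
      + (a + 1) * (c + a * c ^ 2 + (a + 1) * (bi ^ 2 * c ^ 2 * d + bi ^ 2 * c ^ 4 * d + c ^ 4))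
      + (a + a ^ 2) * (d + b ^ 2) * x ^ 2
      + (a + 1) * (e + a * d ^ 2 + (a + 1) * (bi ^ 2 * d ^ 3 + b ^ 2 * d + b ^ 4)) * x ^ 4 := by
    simp only [y', mu4ConjConst, mu4ConjQuad, mu4ConjQuartic]
    linear_combination
      ((a + 1) * (c + a * c ^ 2 + (a + 1) * (bi ^ 2 * c ^ 2 * d + bi ^ 2 * c ^ 4 * d + c ^ 4))
        + (a + a ^ 2) * d * x ^ 2 + (a + 1) * (e + a * d ^ 2 + (a + 1) * bi ^ 2 * d ^ 3) * x ^ 4) * hb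
  rw [hy2, hy4, hy'2, hy'4, hby', mu4ConjConst_sq h2 ha, mu4ConjQuad_sq h2 ha]
  simp only [y]
  linear_combination -(c + a * c ^ 4 + (a + 1) ^ 2 * bi ^ 2 * d * (c ^ 2 + c ^ 4) + a ^ 2 * d * x ^ 2
    + (e + a * b ^ 4 + (a + 1) ^ 2 * (b ^ 2 * d + bi ^ 2 * d ^ 3)) * x ^ 4) * h2

end Conjugate

open Polynomial

/-- In characteristic 2, the conjugate of the μ₄-substitution
`g = a·X + (a+a²)·X² + (1+a²)·X⁴` (with `a⁴ = 1`) by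
`h = b·X + c + d·X² + e·X⁴` is the substitution `g′` below,
i.e. `g ∘ h = h ∘ g′`. -/
theorem mu4_conj_char_two {R : Type*} [CommRing R] (h2 : (2 : R) = 0)
    (b : Rˣ) (c d e : R) (hd : d ^ 4 = 0) (he : e ^ 2 = 0)
    (a : R) (ha : a ^ 4 = 1) :
    let bi : R := ((b⁻¹ : Rˣ) : R)
    let h : R[X] := C (b : R) * X + C c + C d * X ^ 2 + C e * X ^ 4
    let g : R[X] := C a * X + C (a + a ^ 2) * X ^ 2 + C (1 + a ^ 2) * X ^ 4
    let g' : R[X] := C a * X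
      + C ((a + 1) * bi *
          (c + a * c ^ 2 + (a + 1) * (bi ^ 2 * c ^ 2 * d + bi ^ 2 * c ^ 4 * d + c ^ 4)))
      + C ((a + a ^ 2) * (bi * d + (b : R))) * X ^ 2
      + C ((a + 1) * (bi * e + a * bi * d ^ 2
          + (a + 1) * (bi ^ 3 * d ^ 3 + (b : R) * d + (b : R) ^ 3))) * X ^ 4
    g.comp h = h.comp g' := by
  intro bi h g g'
  simp only [g, h, g', add_comp, mul_comp, C_comp, X_comp, pow_comp, one_comp, map_add, map_mul,
    map_pow, map_one]
  exact mu4_conj_identity (by rw [← map_ofNat C, h2, map_zero])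
    (by rw [← map_mul, Units.mul_inv, map_one]) (by rw [← map_pow, hd, map_zero])
    (by rw [← map_pow, he, map_zero]) (by rw [← map_pow, ha, map_one]) X
end
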